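/- Short-maturity expansion of the Black-Scholes put price: fix S₀ > 0, σ > 0 and z ∈ ℝ, and set Δ(θ) = (e^{z√θ} − 1)/√θ. Then, as θ → 0⁺, p_BS(S₀, S₀·e^{z√θ}, θ, σ)/(S₀·√θ) − [ Δ(θ)·Φ(Δ(θ)/σ) + σ·φ(Δ(θ)/σ)·(1 + (z/2)·√θ) ] = o(√θ). -/

import Mathlib

open MeasureTheory Real Filter

/-- The standard normal density. -/
noncomputable def stdNormalPDF (x : ℝ) : ℝ :=
  (Real.sqrt (2 * Real.pi))⁻¹ * Real.exp (-(x ^ 2) / 2)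

/-- The standard normal cumulative distribution function. -/
noncomputable def stdNormalCDF (x : ℝ) : ℝ :=
  ∫ t in Set.Iic x, stdNormalPDF t

/-- `d₁ = log(S/K)/(σ√θ) + σ√θ/2`. -/
noncomputable def d1 (S K θ σ : ℝ) : ℝ :=
  Real.log (S / K) / (σ * Real.sqrt θ) + σ * Real.sqrt θ / 2

/-- `d₂ = d₁ − σ√θ`. -/
noncomputable def d2 (S K θ σ : ℝ) : ℝ :=
  d1 S K θ σ - σ * Real.sqrt θ

/-- Black-Scholes call price `c_BS(S,K,θ,σ) = S·Φ(d₁) − K·Φ(d₂)`. -/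
noncomputable def cBS (S K θ σ : ℝ) : ℝ :=
  S * stdNormalCDF (d1 S K θ σ) - K * stdNormalCDF (d2 S K θ σ)

/-- Black-Scholes put price `p_BS(S,K,θ,σ) = K·Φ(−d₂) − S·Φ(−d₁)`. -/
noncomputable def pBS (S K θ σ : ℝ) : ℝ :=
  K * stdNormalCDF (-(d2 S K θ σ)) - S * stdNormalCDF (-(d1 S K θ σ))

/-! With `t = √θ` and `K = S₀e^{zt}` one has `p_BS/S₀ = P(t) := e^{zt}Φ(z/σ + σt/2) − Φ(z/σ − σt/2)`,
a smooth function with `P(0) = 0`, so `p_BS/(S₀√θ)` is the difference quotient (`dslope`) of `P`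
at `0`. If `f'` is differentiable at `a`, then `dslope f a` is differentiable at `a` with derivative
`f''(a)/2`. This makes both `P(t)/t` and the bracketed approximation (written through
`Δ = dslope (e^{z·}) 0` and the Bachelier price `G(x) = xΦ(x/σ) + σφ(x/σ)`, whose derivative is
`Φ(x/σ)`) differentiable at `t = 0`, with the same value `G(z)` and the same derivative `zG(z)/2`
there. Their difference is therefore `o(t)`. -/

open Asymptotics Topology

theorem stdNormalPDF_eq_gaussianPDFReal :
    stdNormalPDF = ProbabilityTheory.gaussianPDFReal 0 1 := by
  ext x
  simp [stdNormalPDF, ProbabilityTheory.gaussianPDFReal]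

theorem integrable_stdNormalPDF : Integrable stdNormalPDF :=
  stdNormalPDF_eq_gaussianPDFReal ▸ ProbabilityTheory.integrable_gaussianPDFReal 0 1

theorem continuous_stdNormalPDF : Continuous stdNormalPDF := by
  unfold stdNormalPDF
  fun_prop

theorem hasDerivAt_stdNormalCDF (x : ℝ) : HasDerivAt stdNormalCDF (stdNormalPDF x) x := by
  have hsplit : ∀ y, stdNormalCDF y = stdNormalCDF 0 + ∫ t in (0 : ℝ)..y, stdNormalPDF t := by
    intro y
    rw [← intervalIntegral.integral_Iic_sub_Iic integrable_stdNormalPDF.integrableOn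
      integrable_stdNormalPDF.integrableOn]
    unfold stdNormalCDF
    ring
  rw [funext hsplit]
  exact (continuous_stdNormalPDF.integral_hasStrictDerivAt 0 x).hasDerivAt.const_add _

theorem hasDerivAt_stdNormalPDF (x : ℝ) :
    HasDerivAt stdNormalPDF (-x * stdNormalPDF x) x := by
  have hexponent : HasDerivAt (fun y : ℝ => -(y ^ 2) / 2) (-x) x :=
    ((hasDerivAt_pow 2 x).neg.div_const 2).congr_deriv (by norm_num; ring)
  exact ((hexponent.exp).const_mul (√(2 * π))⁻¹).congr_deriv (by unfold stdNormalPDF; ring)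

theorem hasDerivAt_dslope_same {f f' : ℝ → ℝ} {a f'' : ℝ}
    (hf : ∀ x, HasDerivAt f (f' x) x) (hf' : HasDerivAt f' f'' a) :
    HasDerivAt (dslope f a) (f'' / 2) a := by
  set g : ℝ → ℝ := fun x => f x - f a - f' a * (x - a) - f'' * (x - a) ^ 2 / 2
  have hg : ∀ x ∈ Set.univ, HasDerivWithinAt g (f' x - f' a - f'' * (x - a)) Set.univ x := by
    intro x _
    have h := (((hf x).sub_const (f a)).sub (((hasDerivAt_id' x).sub_const a).const_mul (f' a))).sub
      ((((hasDerivAt_id' x).sub_const a).pow 2).const_mul f'' |>.div_const 2)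
    exact (h.congr_deriv (by ring)).hasDerivWithinAt
  have hg' : (fun x => f' x - f' a - f'' * (x - a)) =o[𝓝[Set.univ] a] fun x => (x - a) ^ 1 := by
    simpa [mul_comm] using hasDerivAt_iff_isLittleO.mp hf'
  have hgo := convex_univ.isLittleO_pow_succ_real (Set.mem_univ a) hg hg'
  rw [nhdsWithin_univ] at hgo
  have hlim := (hgo.tendsto_div_nhds_zero.mono_left (nhdsWithin_le_nhds (s := {a}ᶜ))).add_const
    (f'' / 2)
  rw [zero_add] at hlim
  rw [hasDerivAt_iff_tendsto_slope]
  refine hlim.congr' ?_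
  filter_upwards [self_mem_nhdsWithin] with x hx
  have hxa : x - a ≠ 0 := sub_ne_zero.mpr hx
  rw [slope_def_field, dslope_of_ne _ hx, dslope_same, (hf a).deriv, slope_def_field]
  simp only [g]
  field_simp
  ring

theorem isLittleO_sub_of_hasDerivAt {f g : ℝ → ℝ} {a c : ℝ} (hf : HasDerivAt f c a)
    (hg : HasDerivAt g c a) (hfg : f a = g a) :
    (fun x => f x - g x) =o[𝓝 a] fun x => x - a := by
  have h := hasDerivAt_iff_isLittleO.mp ((hf.sub hg).congr_deriv (sub_self c))
  simpa [hfg] using h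

theorem hasDerivAt_exp_const_mul (z t : ℝ) :
    HasDerivAt (fun s => exp (z * s)) (z * exp (z * t)) t :=
  ((hasDerivAt_id' t).const_mul z).exp.congr_deriv (by ring)

theorem hasDerivAt_const_add_mul (b k t : ℝ) : HasDerivAt (fun s => b + k * s) k t :=
  ((hasDerivAt_id' t).const_mul k).const_add b |>.congr_deriv (mul_one k)

noncomputable def bachelierCall (σ x : ℝ) : ℝ :=
  x * stdNormalCDF (x / σ) + σ * stdNormalPDF (x / σ)

theorem hasDerivAt_bachelierCall {σ : ℝ} (hσ : σ ≠ 0) (x : ℝ) :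
    HasDerivAt (bachelierCall σ) (stdNormalCDF (x / σ)) x := by
  have hu : HasDerivAt (fun y => y / σ) (1 / σ) x := (hasDerivAt_id' x).div_const σ
  have h := ((hasDerivAt_id' x).mul ((hasDerivAt_stdNormalCDF (x / σ)).comp x hu)).add
    (((hasDerivAt_stdNormalPDF (x / σ)).comp x hu).const_mul σ)
  exact h.congr_deriv (by simp only [Function.comp_apply]; field_simp; ring)

section ShortMaturity

variable (z σ : ℝ)

noncomputable def normalizedPut (t : ℝ) : ℝ :=
  exp (z * t) * stdNormalCDF (z / σ + σ / 2 * t) - stdNormalCDF (z / σ - σ / 2 * t)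

noncomputable def normalizedPutDeriv (t : ℝ) : ℝ :=
  z * exp (z * t) * stdNormalCDF (z / σ + σ / 2 * t)
    + σ / 2 * (exp (z * t) * stdNormalPDF (z / σ + σ / 2 * t)
      + stdNormalPDF (z / σ - σ / 2 * t))

theorem pBS_strike_mul_exp {S₀ θ : ℝ} (hS₀ : S₀ ≠ 0) (hσ : σ ≠ 0) (hθ : 0 < θ) :
    pBS S₀ (S₀ * exp (z * √θ)) θ σ = S₀ * normalizedPut z σ √θ := by
  have ht : √θ ≠ 0 := (sqrt_pos.mpr hθ).ne'
  have hlog : log (S₀ / (S₀ * exp (z * √θ))) = -(z * √θ) := by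
    rw [div_mul_cancel_left₀ hS₀, log_inv, log_exp]
  have hd1 : -d1 S₀ (S₀ * exp (z * √θ)) θ σ = z / σ - σ / 2 * √θ := by
    rw [d1, hlog]
    field_simp
    ring
  have hd2 : -d2 S₀ (S₀ * exp (z * √θ)) θ σ = z / σ + σ / 2 * √θ := by
    rw [d2, d1, hlog]
    field_simp
    ring
  rw [pBS, hd1, hd2, normalizedPut]
  ring

theorem hasDerivAt_normalizedPut (t : ℝ) :
    HasDerivAt (normalizedPut z σ) (normalizedPutDeriv z σ t) t := by
  have hp := (hasDerivAt_stdNormalCDF _).comp t (hasDerivAt_const_add_mul (z / σ) (σ / 2) t)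
  have hm := (hasDerivAt_stdNormalCDF _).comp t (hasDerivAt_const_add_mul (z / σ) (-(σ / 2)) t)
  have h := ((hasDerivAt_exp_const_mul z t).mul hp).sub hm
  simp only [Function.comp_def, neg_mul, ← sub_eq_add_neg] at h
  exact h.congr_deriv (by rw [normalizedPutDeriv]; ring)

theorem hasDerivAt_normalizedPutDeriv_zero :
    HasDerivAt (normalizedPutDeriv z σ) (z * bachelierCall σ z) 0 := by
  have hp := hasDerivAt_const_add_mul (z / σ) (σ / 2) 0
  have hm := hasDerivAt_const_add_mul (z / σ) (-(σ / 2)) 0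
  have h := (((hasDerivAt_exp_const_mul z 0).const_mul z).mul
      ((hasDerivAt_stdNormalCDF _).comp 0 hp)).add
    ((((hasDerivAt_exp_const_mul z 0).mul ((hasDerivAt_stdNormalPDF _).comp 0 hp)).add
      ((hasDerivAt_stdNormalPDF _).comp 0 hm)).const_mul (σ / 2))
  simp only [Function.comp_def, neg_mul, ← sub_eq_add_neg] at h
  refine (h.congr_deriv ?_).congr_of_eventuallyEq (Eventually.of_forall fun t => ?_)
  · simp only [mul_zero, add_zero, sub_zero, exp_zero, bachelierCall]
    ring
  · simp only [normalizedPutDeriv, Pi.add_apply, Pi.mul_apply]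

theorem hasDerivAt_dslope_normalizedPut :
    HasDerivAt (dslope (normalizedPut z σ) 0) (z * bachelierCall σ z / 2) 0 :=
  hasDerivAt_dslope_same (hasDerivAt_normalizedPut z σ) (hasDerivAt_normalizedPutDeriv_zero z σ)

theorem dslope_normalizedPut_zero : dslope (normalizedPut z σ) 0 0 = bachelierCall σ z := by
  rw [dslope_same, (hasDerivAt_normalizedPut z σ 0).deriv, normalizedPutDeriv, bachelierCall]
  simp only [mul_zero, add_zero, sub_zero, exp_zero]
  ring

theorem hasDerivAt_dslope_exp_const_mul :
    HasDerivAt (dslope (fun t => exp (z * t)) 0) (z ^ 2 / 2) 0 := by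
  have h := (hasDerivAt_exp_const_mul z 0).const_mul z
  rw [mul_zero, exp_zero, mul_one, ← sq] at h
  exact hasDerivAt_dslope_same (hasDerivAt_exp_const_mul z) h

theorem dslope_exp_const_mul_zero : dslope (fun t => exp (z * t)) 0 0 = z := by
  rw [dslope_same, (hasDerivAt_exp_const_mul z 0).deriv, mul_zero, exp_zero, mul_one]

/-- For `t ≠ 0` this is `Δ Φ(Δ/σ) + σ φ(Δ/σ) (1 + z t/2)` with `Δ = (e^{zt} − 1)/t`; the `dslope`
fills in the removable singularity `Δ(0) = z`. -/
noncomputable def putExpansion (t : ℝ) : ℝ :=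
  bachelierCall σ (dslope (fun s => exp (z * s)) 0 t)
    + σ * z / 2 * t * stdNormalPDF (dslope (fun s => exp (z * s)) 0 t / σ)

theorem putExpansion_zero : putExpansion z σ 0 = bachelierCall σ z := by
  rw [putExpansion, dslope_exp_const_mul_zero]
  simp

theorem hasDerivAt_putExpansion_zero (hσ : σ ≠ 0) :
    HasDerivAt (putExpansion z σ) (z * bachelierCall σ z / 2) 0 := by
  have hΔ := hasDerivAt_dslope_exp_const_mul z
  have h := ((hasDerivAt_bachelierCall hσ _).comp 0 hΔ).add
    (((hasDerivAt_id' 0).const_mul (σ * z / 2)).mul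
      ((hasDerivAt_stdNormalPDF _).comp 0 (hΔ.div_const σ)))
  refine h.congr_deriv ?_
  simp only [Function.comp_apply]
  rw [dslope_exp_const_mul_zero, bachelierCall]
  ring

theorem dslope_normalizedPut_sub_putExpansion_isLittleO (hσ : σ ≠ 0) :
    (fun t => dslope (normalizedPut z σ) 0 t - putExpansion z σ t) =o[𝓝 0] fun t => t := by
  simpa using isLittleO_sub_of_hasDerivAt (hasDerivAt_dslope_normalizedPut z σ)
    (hasDerivAt_putExpansion_zero z σ hσ)
    ((dslope_normalizedPut_zero z σ).trans (putExpansion_zero z σ).symm)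

end ShortMaturity

/-- Short-maturity expansion of the Black-Scholes put price: with
`Δ(θ) = (e^{z√θ} − 1)/√θ`, as `θ → 0⁺`,
`p_BS(S₀, S₀e^{z√θ}, θ, σ)/(S₀√θ) − [Δ(θ)Φ(Δ(θ)/σ) + σφ(Δ(θ)/σ)(1 + (z/2)√θ)]
  = o(√θ)`. -/
theorem blackScholes_put_short_maturity_expansion
    (S₀ σ : ℝ) (hS₀ : 0 < S₀) (hσ : 0 < σ) (z : ℝ) :
    (fun θ : ℝ =>
        pBS S₀ (S₀ * Real.exp (z * Real.sqrt θ)) θ σ / (S₀ * Real.sqrt θ)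
          - ((Real.exp (z * Real.sqrt θ) - 1) / Real.sqrt θ
                * stdNormalCDF ((Real.exp (z * Real.sqrt θ) - 1) / Real.sqrt θ / σ)
              + σ * stdNormalPDF ((Real.exp (z * Real.sqrt θ) - 1) / Real.sqrt θ / σ)
                * (1 + z / 2 * Real.sqrt θ)))
      =o[nhdsWithin 0 (Set.Ioi 0)] fun θ : ℝ => Real.sqrt θ := by
  have hsqrt : Tendsto sqrt (𝓝[>] 0) (𝓝 0) :=
    (continuous_sqrt.tendsto' 0 0 sqrt_zero).mono_left nhdsWithin_le_nhds
  refine EventuallyEq.trans_isLittleO ?_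
    ((dslope_normalizedPut_sub_putExpansion_isLittleO z σ hσ.ne').comp_tendsto hsqrt)
  filter_upwards [self_mem_nhdsWithin] with θ hθ
  have ht : √θ ≠ 0 := (sqrt_pos.mpr hθ).ne'
  rw [pBS_strike_mul_exp z σ hS₀.ne' hσ.ne' hθ]
  simp only [Function.comp_apply, dslope_of_ne _ ht, slope_def_field, putExpansion, bachelierCall,
    normalizedPut, mul_zero, add_zero, exp_zero, one_mul, sub_self, sub_zero,
    mul_div_mul_left _ _ hS₀.ne']
  ring
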